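/- For every non-negative integer t there exists a polynomial Q_t ∈ ℚ[x] of degree t such that for all positive integers ν, the coefficient of z^{2t} in S(z)^{-ν-1} equals Q_t(ν). -/

import Mathlib

/-!
Since `S` is even with constant term 1, `S⁻¹ = 1 + z²W` for a power series `W` with
`W(0) = -[z²]S = -1/24`. Expanding `(1 + z²W)^(ν+1)` binomially, only the terms `k ≤ t`
reach `z^{2t}`, so `[z^{2t}] S^{-ν-1} = ∑_{k ≤ t} c_k (ν+1 choose k)` with `c_k` independent
of `ν` and `c_t = W(0)^t ≠ 0`. A combination of binomial coefficients `n choose k`, `k ≤ t`,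
whose top coefficient is non-zero is a polynomial of degree exactly `t` in `n`.
-/

open Nat

/-- The formal power series `S(z) = 2 sinh(z/2)/z = ∑_{m≥0} z^{2m}/(2^{2m}(2m+1)!)`,
an even series with constant term 1 and non-zero coefficient of `z²`. -/
noncomputable def Spow : PowerSeries ℚ :=
  PowerSeries.mk fun n => if Even n then (1 : ℚ) / (2 ^ n * (n + 1)!) else 0

namespace Polynomial

theorem degree_descPochhammer (K : Type*) [Field K] (k : ℕ) :
    (descPochhammer K k).degree = k := by
  rw [degree_eq_natDegree (monic_descPochhammer K k).ne_zero, descPochhammer_natDegree]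

theorem exists_degree_eq_eval_natCast_eq_sum_mul_choose {K : Type*} [Field K] [CharZero K]
    (c : ℕ → K) (t : ℕ) (hc : c t ≠ 0) :
    ∃ P : K[X], P.degree = t ∧
      ∀ n : ℕ, P.eval (n : K) = ∑ k ∈ Finset.range (t + 1), c k * n.choose k := by
  refine ⟨∑ k ∈ Finset.range (t + 1), C (c k / k !) * descPochhammer K k, ?_, fun n => ?_⟩
  · have hlow : (∑ k ∈ Finset.range t, C (c k / k !) * descPochhammer K k).degree < t := by
      rw [← mem_degreeLT]
      refine Submodule.sum_mem _ fun k hk => mem_degreeLT.mpr ?_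
      rw [← smul_eq_C_mul]
      refine (degree_smul_le _ _).trans_lt ?_
      rw [degree_descPochhammer]
      exact_mod_cast Finset.mem_range.mp hk
    have htop : (C (c t / t !) * descPochhammer K t).degree = t := by
      rw [degree_C_mul (div_ne_zero hc (by exact_mod_cast t.factorial_ne_zero)),
        degree_descPochhammer]
    rw [Finset.sum_range_succ, degree_add_eq_right_of_degree_lt (htop ▸ hlow), htop]
  · simp only [eval_finsetSum, eval_mul, eval_C, descPochhammer_eval_eq_descFactorial,
      Nat.descFactorial_eq_factorial_mul_choose]
    refine Finset.sum_congr rfl fun k _ => ?_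
    have : (k ! : K) ≠ 0 := by exact_mod_cast k.factorial_ne_zero
    push_cast
    field_simp

end Polynomial

namespace PowerSeries

theorem exists_inv_one_add_X_pow_mul {k : Type*} [Field k] {m : ℕ} (hm : m ≠ 0) (V : k⟦X⟧) :
    ∃ W : k⟦X⟧, (1 + X ^ m * V)⁻¹ = 1 + X ^ m * W ∧ constantCoeff W = -constantCoeff V := by
  have hunit : constantCoeff (1 + X ^ m * V) ≠ 0 := by simp [hm]
  refine ⟨-(V * (1 + X ^ m * V)⁻¹), ?_, by simp [constantCoeff_inv, hm]⟩
  rw [inv_eq_iff_mul_eq_one hunit]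
  linear_combination (-(X ^ m * V)) * PowerSeries.inv_mul_cancel _ hunit

theorem coeff_mul_one_add_X_pow_mul_pow {R : Type*} [CommRing R] {m : ℕ} (hm : m ≠ 0)
    (W : R⟦X⟧) (t N : ℕ) :
    coeff (m * t) ((1 + X ^ m * W) ^ N) =
      ∑ k ∈ Finset.range (t + 1), coeff (m * (t - k)) (W ^ k) * N.choose k := by
  set g : ℕ → R := fun k => coeff (m * t) ((X ^ m * W) ^ k) * N.choose k
  have hg : ∀ k, g k = if k ≤ t then coeff (m * (t - k)) (W ^ k) * N.choose k else 0 := by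
    intro k
    simp only [g, mul_pow, ← pow_mul, coeff_X_pow_mul', ← Nat.mul_sub,
      Nat.mul_le_mul_left_iff (Nat.pos_of_ne_zero hm), ite_mul, zero_mul]
  have hg_of_gt_N : ∀ k ≥ N + 1, g k = 0 := fun k hk => by
    simp only [g, Nat.choose_eq_zero_of_lt (show N < k by omega), Nat.cast_zero, mul_zero]
  have hg_of_gt_t : ∀ k ≥ t + 1, g k = 0 := fun k hk => by rw [hg, if_neg (by omega)]
  calc coeff (m * t) ((1 + X ^ m * W) ^ N)
      = ∑ k ∈ Finset.range (N + 1), g k := by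
        rw [add_comm, add_pow, map_sum]
        refine Finset.sum_congr rfl fun k _ => ?_
        rw [one_pow, mul_one, ← map_natCast C, coeff_mul_C]
    _ = ∑ k ∈ Finset.range (t + 1), g k := by
        rw [← Finset.eventually_constant_sum hg_of_gt_N (n := N + t + 1) (by omega),
          Finset.eventually_constant_sum hg_of_gt_t (by omega)]
    _ = _ := Finset.sum_congr rfl fun k hk => by
        rw [hg, if_pos (Nat.lt_succ_iff.mp (Finset.mem_range.mp hk))]

end PowerSeries

open PowerSeries

theorem Spow_eq_one_add_X_sq_mul :
    ∃ V : PowerSeries ℚ, Spow = 1 + X ^ 2 * V ∧ constantCoeff V = 1 / 24 := by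
  refine ⟨mk fun i => coeff (i + 2) Spow, ?_, ?_⟩
  · have htrunc : trunc 2 Spow = 1 := by
      rw [trunc_succ, trunc_one_left]
      simp [Spow]
    conv_lhs => rw [eq_X_pow_mul_shift_add_trunc 2 Spow, htrunc]
    rw [add_comm, Polynomial.coe_one]
  · norm_num [Spow, ← coeff_zero_eq_constantCoeff_apply, Nat.factorial]

/-- For every `t ≥ 0` there is a polynomial `Q_t ∈ ℚ[x]` of degree `t` such that
`[z^{2t}] S(z)^{-ν-1} = Q_t(ν)` for all positive integers `ν`. -/
theorem coeff_S_neg_pow_polynomial (t : ℕ) :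
    ∃ Q : Polynomial ℚ, Q.degree = t ∧
      ∀ ν : ℕ, 0 < ν →
        PowerSeries.coeff (2 * t) (Spow⁻¹ ^ (ν + 1)) = Q.eval (ν : ℚ) := by
  obtain ⟨V, hS, hV⟩ := Spow_eq_one_add_X_sq_mul
  obtain ⟨W, hinv, hW⟩ := exists_inv_one_add_X_pow_mul two_ne_zero V
  obtain ⟨P, hPdeg, hPeval⟩ := Polynomial.exists_degree_eq_eval_natCast_eq_sum_mul_choose
    (fun k => coeff (2 * (t - k)) (W ^ k)) t (by simp [hW, hV])
  refine ⟨Polynomial.taylor 1 P, by rw [Polynomial.degree_taylor, hPdeg], fun ν _ => ?_⟩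
  rw [hS, hinv, coeff_mul_one_add_X_pow_mul_pow two_ne_zero, Polynomial.taylor_eval,
    ← Nat.cast_add_one, hPeval]
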